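/- Let q be a root of unity of order d in a field K of characteristic 0, and let l, m ≤ d−1 be nonnegative integers with l + m ≥ d. Then the Gaussian binomial coefficient (m+l choose l)_q equals 0. -/
import Mathlib


/-- The Gaussian binomial coefficient `(n choose k)_q`. -/
def qbinom {K : Type*} [CommRing K] (q : K) : ℕ → ℕ → K
  | _, 0 => 1
  | 0, _ + 1 => 0
  | n + 1, k + 1 => qbinom q n k + q ^ (k + 1) * qbinom q n (k + 1)

theorem qbinom_eq_zero {K : Type*} [CommRing K] (q : K) :
    ∀ n k, n < k → qbinom q n k = 0 := by
  intro n
  induction n with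
  | zero =>
    intro k hk
    cases k with
    | zero => omega
    | succ k => rfl
  | succ n ih =>
    intro k hk
    cases k with
    | zero => omega
    | succ k =>
      rw [qbinom, ih k (by omega), ih (k + 1) (by omega)]
      ring

theorem qbinom_self {K : Type*} [CommRing K] (q : K) : ∀ n, qbinom q n n = 1 := by
  intro n
  induction n with
  | zero => rfl
  | succ n ih =>
    rw [qbinom, ih, qbinom_eq_zero q n (n + 1) (by omega)]
    ring

theorem qbinom_mul {K : Type*} [CommRing K] (q : K) :
    ∀ n k, k ≤ n →
      qbinom q n k * ∏ i ∈ Finset.range k, (1 - q ^ (i + 1)) =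
        ∏ i ∈ Finset.range k, (1 - q ^ (n - k + i + 1)) := by
  intro n
  induction n with
  | zero =>
    intro k hk
    interval_cases k
    simp [qbinom]
  | succ n ih =>
    intro k hk
    cases k with
    | zero => simp [qbinom]
    | succ k =>
      rcases Nat.lt_or_ge k n with h | h
      · have A := ih k (by omega)
        have B := ih (k + 1) (by omega)
        have hB : ∏ i ∈ Finset.range (k + 1), (1 - q ^ (n - (k + 1) + i + 1)) =
            (∏ i ∈ Finset.range k, (1 - q ^ (n - k + i + 1))) * (1 - q ^ (n - k)) := by
          rw [Finset.prod_range_succ' (fun i => 1 - q ^ (n - (k + 1) + i + 1))]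
          congr 1
          · exact Finset.prod_congr rfl fun i _ => by congr 2; omega
          · congr 2; omega
        rw [hB] at B
        rw [Finset.prod_range_succ] at B
        have hT : ∏ i ∈ Finset.range (k + 1), (1 - q ^ (n + 1 - (k + 1) + i + 1)) =
            (∏ i ∈ Finset.range k, (1 - q ^ (n - k + i + 1))) * (1 - q ^ (n + 1)) := by
          rw [Finset.prod_range_succ]
          congr 1
          · exact Finset.prod_congr rfl fun i _ => by congr 2; omega
          · congr 2; omega
        have hq : q ^ (k + 1) * q ^ (n - k) = q ^ (n + 1) := by
          rw [← pow_add]; congr 1; omega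
        rw [hT, qbinom, Finset.prod_range_succ]
        linear_combination (1 - q ^ (k + 1)) * A + q ^ (k + 1) * B -
          (∏ i ∈ Finset.range k, (1 - q ^ (n - k + i + 1))) * hq
      · have hk' : k = n := by omega
        subst hk'
        rw [qbinom_self]
        simp

/-- for `q` a root of unity of order `d` in a field of characteristic 0
and `l, m ≤ d - 1` with `l + m ≥ d`, the Gaussian binomial `(m+l choose l)_q` vanishes. -/
theorem stmt2 {K : Type*} [Field K] [CharZero K] (q : K) (d : ℕ)
    (hd : 0 < d)
    (h1 : q ^ d = 1) (h2 : ∀ k : ℕ, 0 < k → k < d → q ^ k ≠ 1)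
    (l m : ℕ) (hl : l ≤ d - 1) (hm : m ≤ d - 1) (hlm : d ≤ l + m) :
    qbinom q (m + l) l = 0 := by
  have key := qbinom_mul q (m + l) l (by omega)
  have hRHS : ∏ i ∈ Finset.range l, (1 - q ^ (m + l - l + i + 1)) = 0 := by
    apply Finset.prod_eq_zero (i := d - m - 1)
    · simp only [Finset.mem_range]; omega
    · have : m + l - l + (d - m - 1) + 1 = d := by omega
      rw [this, h1, sub_self]
  rw [hRHS] at key
  have hprod : ∏ i ∈ Finset.range l, (1 - q ^ (i + 1)) ≠ 0 := by
    apply Finset.prod_ne_zero_iff.mpr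
    intro i hi
    simp only [Finset.mem_range] at hi
    intro hz
    exact h2 (i + 1) (by omega) (by omega) (by linear_combination -hz)
  exact (mul_eq_zero.mp key).resolve_right hprod
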